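/- Let μ : [0,∞) → ℝ be continuously differentiable, decreasing (μ' ≤ 0), and satisfy m(t−s) ≤ μ(t²)t − μ(s²)s ≤ M(t−s) for all t ≥ s ≥ 0 with 0 < m ≤ M. Then the operator u ↦ A[u](u) from V to V*, defined by A[u](u)(w) = ∫_Ω μ(|e(u)|²) e(u) : e(w) dx, is Lipschitz continuous with constant √3 M and strongly monotone with constant m, i.e., A[u](u)(w) − A[v](v)(w) ≤ √3 M‖u−v‖_V‖w‖_V and A[u](u)(u−v) − A[v](v)(u−v) ≥ m‖u−v‖_V² for all u,v,w ∈ V. -/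

import Mathlib

open MeasureTheory
open scoped BigOperators

open Filter Topology

def frobIP {d : ℕ} (A B : Matrix (Fin d) (Fin d) ℝ) : ℝ :=
  ∑ i, ∑ j, A i j * B i j

noncomputable def frobNorm {d : ℕ} (A : Matrix (Fin d) (Fin d) ℝ) : ℝ :=
  Real.sqrt (frobIP A A)

lemma frobIP_self_nonneg {d : ℕ} (A : Matrix (Fin d) (Fin d) ℝ) : 0 ≤ frobIP A A :=
  Finset.sum_nonneg fun _ _ => Finset.sum_nonneg fun _ _ => mul_self_nonneg _

lemma frobNorm_nonneg {d : ℕ} (A : Matrix (Fin d) (Fin d) ℝ) : 0 ≤ frobNorm A :=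
  Real.sqrt_nonneg _

lemma frobNorm_sq {d : ℕ} (A : Matrix (Fin d) (Fin d) ℝ) : frobNorm A ^ 2 = frobIP A A :=
  Real.sq_sqrt (frobIP_self_nonneg A)

lemma frobIP_comm {d : ℕ} (A B : Matrix (Fin d) (Fin d) ℝ) : frobIP A B = frobIP B A := by
  simp [frobIP, mul_comm]

lemma frobIP_cs {d : ℕ} (A B : Matrix (Fin d) (Fin d) ℝ) :
    frobIP A B ≤ frobNorm A * frobNorm B := by
  have h : (frobIP A B) ^ 2 ≤ frobIP A A * frobIP B B := by
    have := Finset.sum_mul_sq_le_sq_mul_sq (Finset.univ ×ˢ Finset.univ)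
      (fun p : Fin d × Fin d => A p.1 p.2) (fun p => B p.1 p.2)
    simpa [frobIP, Fintype.sum_prod_type, sq] using this
  calc frobIP A B ≤ |frobIP A B| := le_abs_self _
    _ = Real.sqrt ((frobIP A B) ^ 2) := (Real.sqrt_sq_eq_abs _).symm
    _ ≤ Real.sqrt (frobIP A A * frobIP B B) := Real.sqrt_le_sqrt h
    _ = frobNorm A * frobNorm B := Real.sqrt_mul (frobIP_self_nonneg A) _

lemma frobIP_abs_le {d : ℕ} (A B : Matrix (Fin d) (Fin d) ℝ) :
    |frobIP A B| ≤ frobNorm A * frobNorm B := by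
  rcases abs_cases (frobIP A B) with ⟨h, _⟩ | ⟨h, _⟩
  · rw [h]; exact frobIP_cs A B
  · rw [h]
    have := frobIP_cs (-A) B
    have hn : frobIP (-A) B = -frobIP A B := by
      simp [frobIP, Finset.sum_neg_distrib]
    have hnn : frobNorm (-A) = frobNorm A := by
      simp [frobNorm, frobIP]
    rw [hn, hnn] at this; linarith

lemma frobIP_smul_sub_left {d : ℕ} (α β : ℝ) (A B C : Matrix (Fin d) (Fin d) ℝ) :
    frobIP (α • A - β • B) C = α * frobIP A C - β * frobIP B C := by
  simp [frobIP, Matrix.sub_apply, Matrix.smul_apply, smul_eq_mul, sub_mul,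
    Finset.sum_sub_distrib, Finset.mul_sum, mul_assoc]

lemma frobIP_sub_left {d : ℕ} (A B C : Matrix (Fin d) (Fin d) ℝ) :
    frobIP (A - B) C = frobIP A C - frobIP B C := by
  simp [frobIP, Matrix.sub_apply, sub_mul, Finset.sum_sub_distrib]

lemma frobIP_sub_right {d : ℕ} (A B C : Matrix (Fin d) (Fin d) ℝ) :
    frobIP A (B - C) = frobIP A B - frobIP A C := by
  rw [frobIP_comm, frobIP_sub_left, frobIP_comm B A, frobIP_comm C A]

lemma key_lip (a b p α β M : ℝ)
    (hp1 : p ≤ a * b) (hp2 : -(a * b) ≤ p)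
    (h1 : (α * a - β * b) ^ 2 ≤ (M * (a - b)) ^ 2)
    (h2 : (α * a + β * b) ^ 2 ≤ (M * (a + b)) ^ 2) :
    α ^ 2 * a ^ 2 - 2 * (α * β) * p + β ^ 2 * b ^ 2 ≤ M ^ 2 * (a ^ 2 - 2 * p + b ^ 2) := by
  rcases le_total (α * β) (M ^ 2) with h | h
  · nlinarith [mul_nonneg (by linarith : (0:ℝ) ≤ M ^ 2 - α * β)
      (by linarith : (0:ℝ) ≤ a * b - p)]
  · nlinarith [mul_nonneg (by linarith : (0:ℝ) ≤ α * β - M ^ 2)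
      (by linarith : (0:ℝ) ≤ a * b + p)]

lemma key_mono (a b p m α β : ℝ) (hp : p ≤ a * b) (hα : m ≤ α) (hβ : m ≤ β)
    (hd : 0 ≤ (a - b) * ((α - m) * a - (β - m) * b)) :
    m * (a ^ 2 - 2 * p + b ^ 2) ≤ α * a ^ 2 - (α + β) * p + β * b ^ 2 := by
  nlinarith [mul_nonneg (by linarith : (0:ℝ) ≤ α - m + (β - m)) (by linarith : (0:ℝ) ≤ a * b - p)]

section MuBounds
variable (μ : ℝ → ℝ) (m M : ℝ)

lemma mu_ge_m (hm : 0 < m) (hcont : Continuous μ)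
    (hbd : ∀ t s : ℝ, 0 ≤ s → s ≤ t →
      m * (t - s) ≤ μ (t ^ 2) * t - μ (s ^ 2) * s ∧
      μ (t ^ 2) * t - μ (s ^ 2) * s ≤ M * (t - s)) :
    ∀ a : ℝ, 0 ≤ a → m ≤ μ (a ^ 2) := by
  have hpos : ∀ a : ℝ, 0 < a → m ≤ μ (a ^ 2) := by
    intro a ha
    have h := (hbd a 0 le_rfl ha.le).1
    simp only [sub_zero, mul_zero] at h
    have : m * a ≤ μ (a ^ 2) * a := by linarith
    exact le_of_mul_le_mul_right this ha
  intro a ha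
  rcases eq_or_lt_of_le ha with h | h
  · have htend : Tendsto (fun n : ℕ => μ ((1 / (n + 1 : ℝ)) ^ 2)) atTop (𝓝 (μ 0)) := by
      have h0 : Tendsto (fun n : ℕ => (1 / (n + 1 : ℝ)) ^ 2) atTop (𝓝 0) := by
        have := tendsto_one_div_add_atTop_nhds_zero_nat (𝕜 := ℝ)
        simpa using (this.pow 2)
      exact (hcont.tendsto 0).comp h0
    have hge : m ≤ μ 0 := ge_of_tendsto htend
      (Eventually.of_forall fun n => hpos _ (by positivity))
    rw [← h]; simpa using hge
  · exact hpos a h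

lemma mu_mul_le
    (hbd : ∀ t s : ℝ, 0 ≤ s → s ≤ t →
      m * (t - s) ≤ μ (t ^ 2) * t - μ (s ^ 2) * s ∧
      μ (t ^ 2) * t - μ (s ^ 2) * s ≤ M * (t - s)) :
    ∀ a : ℝ, 0 ≤ a → m * a ≤ μ (a ^ 2) * a ∧ μ (a ^ 2) * a ≤ M * a := by
  intro a ha
  have h := hbd a 0 le_rfl ha
  simp only [sub_zero, mul_zero] at h
  constructor <;> linarith [h.1, h.2]

lemma mu_diff_sq (hm : 0 < m)
    (hbd : ∀ t s : ℝ, 0 ≤ s → s ≤ t →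
      m * (t - s) ≤ μ (t ^ 2) * t - μ (s ^ 2) * s ∧
      μ (t ^ 2) * t - μ (s ^ 2) * s ≤ M * (t - s)) :
    ∀ a b : ℝ, 0 ≤ a → 0 ≤ b →
      (μ (a ^ 2) * a - μ (b ^ 2) * b) ^ 2 ≤ (M * (a - b)) ^ 2 := by
  intro a b ha hb
  rcases le_total b a with hab | hab
  · have h := hbd a b hb hab
    have hM0 : 0 ≤ M * (a - b) :=
      le_trans (mul_nonneg hm.le (by linarith)) (le_trans h.1 h.2)
    exact sq_le_sq' (by nlinarith [mul_nonneg hm.le (sub_nonneg.2 hab)]) h.2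
  · have h := hbd b a ha hab
    have hM0 : 0 ≤ M * (b - a) :=
      le_trans (mul_nonneg hm.le (by linarith)) (le_trans h.1 h.2)
    have : (μ (b ^ 2) * b - μ (a ^ 2) * a) ^ 2 ≤ (M * (b - a)) ^ 2 :=
      sq_le_sq' (by nlinarith [mul_nonneg hm.le (sub_nonneg.2 hab)]) h.2
    calc (μ (a ^ 2) * a - μ (b ^ 2) * b) ^ 2
        = (μ (b ^ 2) * b - μ (a ^ 2) * a) ^ 2 := by ring
      _ ≤ (M * (b - a)) ^ 2 := this
      _ = (M * (a - b)) ^ 2 := by ring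

lemma mu_sum_sq (hm : 0 < m)
    (hbd : ∀ t s : ℝ, 0 ≤ s → s ≤ t →
      m * (t - s) ≤ μ (t ^ 2) * t - μ (s ^ 2) * s ∧
      μ (t ^ 2) * t - μ (s ^ 2) * s ≤ M * (t - s)) :
    ∀ a b : ℝ, 0 ≤ a → 0 ≤ b →
      (μ (a ^ 2) * a + μ (b ^ 2) * b) ^ 2 ≤ (M * (a + b)) ^ 2 := by
  intro a b ha hb
  have h1 := mu_mul_le μ m M hbd a ha
  have h2 := mu_mul_le μ m M hbd b hb
  have hma : 0 ≤ m * a := mul_nonneg hm.le ha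
  have hmb : 0 ≤ m * b := mul_nonneg hm.le hb
  exact sq_le_sq' (by nlinarith) (by nlinarith)

lemma mu_hd (hm : 0 < m)
    (hbd : ∀ t s : ℝ, 0 ≤ s → s ≤ t →
      m * (t - s) ≤ μ (t ^ 2) * t - μ (s ^ 2) * s ∧
      μ (t ^ 2) * t - μ (s ^ 2) * s ≤ M * (t - s)) :
    ∀ a b : ℝ, 0 ≤ a → 0 ≤ b →
      0 ≤ (a - b) * ((μ (a ^ 2) - m) * a - (μ (b ^ 2) - m) * b) := by
  intro a b ha hb
  rcases le_total b a with hab | hab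
  · have h := (hbd a b hb hab).1
    have h2 : 0 ≤ (μ (a ^ 2) - m) * a - (μ (b ^ 2) - m) * b := by nlinarith
    exact mul_nonneg (by linarith) h2
  · have h := (hbd b a ha hab).1
    have h2 : (μ (a ^ 2) - m) * a - (μ (b ^ 2) - m) * b ≤ 0 := by nlinarith
    nlinarith [mul_nonneg (by linarith : (0:ℝ) ≤ b - a)
      (by linarith : (0:ℝ) ≤ -((μ (a ^ 2) - m) * a - (μ (b ^ 2) - m) * b))]

end MuBounds

lemma young_pt (l fx gx : ℝ) (hl : 0 < l) : fx * gx ≤ (l * fx ^ 2 + gx ^ 2 / l) / 2 := by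
  rw [← sub_nonneg]
  have h : (l * fx ^ 2 + gx ^ 2 / l) / 2 - fx * gx = (l * fx - gx) ^ 2 / (2 * l) := by
    field_simp; ring
  rw [h]; positivity

lemma integral_cs {α : Type*} [MeasureSpace α] (f g : α → ℝ)
    (hf2 : Integrable (fun x => f x ^ 2)) (hg2 : Integrable (fun x => g x ^ 2))
    (hfg : Integrable (fun x => f x * g x)) :
    ∫ x, f x * g x ≤ Real.sqrt (∫ x, f x ^ 2) * Real.sqrt (∫ x, g x ^ 2) := by
  set s := Real.sqrt (∫ x, f x ^ 2) with hs
  set t := Real.sqrt (∫ x, g x ^ 2) with ht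
  have hs0 : 0 ≤ s := Real.sqrt_nonneg _
  have ht0 : 0 ≤ t := Real.sqrt_nonneg _
  have hI1 : ∫ x, f x ^ 2 = s ^ 2 := (Real.sq_sqrt (integral_nonneg fun x => sq_nonneg _)).symm
  have hI2 : ∫ x, g x ^ 2 = t ^ 2 := (Real.sq_sqrt (integral_nonneg fun x => sq_nonneg _)).symm
  have key : ∀ l : ℝ, 0 < l → ∫ x, f x * g x ≤ (l * s ^ 2 + t ^ 2 / l) / 2 := by
    intro l hl
    have h1 : ∫ x, f x * g x ≤ ∫ x, (l * f x ^ 2 + g x ^ 2 / l) / 2 := by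
      refine integral_mono hfg ?_ fun x => young_pt l (f x) (g x) hl
      exact ((hf2.const_mul l).add (hg2.div_const l)).div_const 2
    have h2 : ∫ x, (l * f x ^ 2 + g x ^ 2 / l) / 2
        = (l * (∫ x, f x ^ 2) + (∫ x, g x ^ 2) / l) / 2 := by
      rw [integral_div, integral_add (hf2.const_mul l) (hg2.div_const l),
        integral_const_mul, integral_div]
    refine (h1.trans_eq h2).trans_eq ?_
    rw [hI1, hI2]
  refine le_of_forall_pos_le_add fun ε hε => ?_
  set δ : ℝ := min 1 (2 * ε / (s + t + 1)) with hδdef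
  have hδ : 0 < δ := lt_min one_pos (by positivity)
  set l : ℝ := (t + δ) / (s + δ) with hl
  have hlpos : 0 < l := div_pos (by linarith) (by linarith)
  have h1 : l * s ^ 2 ≤ s * (t + δ) := by
    rw [hl, div_mul_eq_mul_div, div_le_iff₀ (by linarith)]
    nlinarith [mul_nonneg (mul_nonneg hs0 hδ.le) (by linarith : (0:ℝ) ≤ t + δ)]
  have h2 : t ^ 2 / l ≤ t * (s + δ) := by
    rw [hl, div_div_eq_mul_div, div_le_iff₀ (by linarith)]
    nlinarith [mul_nonneg (mul_nonneg ht0 hδ.le) (by linarith : (0:ℝ) ≤ s + δ)]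
  have h3 : δ * (s + t) / 2 ≤ ε := by
    have hδ2 : δ ≤ 2 * ε / (s + t + 1) := min_le_right _ _
    rw [le_div_iff₀ (by linarith : (0:ℝ) < s + t + 1)] at hδ2
    nlinarith
  calc ∫ x, f x * g x ≤ (l * s ^ 2 + t ^ 2 / l) / 2 := key l hlpos
    _ ≤ (s * (t + δ) + t * (s + δ)) / 2 := by linarith
    _ = s * t + δ * (s + t) / 2 := by ring
    _ ≤ s * t + ε := by linarith

-- pointwise Lipschitz estimate
lemma lip_pt {d : ℕ} (μ : ℝ → ℝ) (m M : ℝ) (hm : 0 < m)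
    (hbd : ∀ t s : ℝ, 0 ≤ s → s ≤ t →
      m * (t - s) ≤ μ (t ^ 2) * t - μ (s ^ 2) * s ∧
      μ (t ^ 2) * t - μ (s ^ 2) * s ≤ M * (t - s))
    (A B C : Matrix (Fin d) (Fin d) ℝ) :
    μ (frobNorm A ^ 2) * frobIP A C - μ (frobNorm B ^ 2) * frobIP B C ≤
      M * (frobNorm (A - B) * frobNorm C) := by
  set a := frobNorm A with hadef
  set b := frobNorm B with hbdef
  have ha0 : 0 ≤ a := frobNorm_nonneg A
  have hb0 : 0 ≤ b := frobNorm_nonneg B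
  have hM0 : 0 ≤ M := by
    have := (mu_mul_le μ m M hbd 1 zero_le_one).1
    have h2 := (mu_mul_le μ m M hbd 1 zero_le_one).2
    nlinarith
  set α := μ (a ^ 2) with hα
  set β := μ (b ^ 2) with hβ
  set D : Matrix (Fin d) (Fin d) ℝ := α • A - β • B with hD
  set p := frobIP A B with hp
  have hAA : frobIP A A = a ^ 2 := (frobNorm_sq A).symm
  have hBB : frobIP B B = b ^ 2 := (frobNorm_sq B).symm
  have hpb : |p| ≤ a * b := frobIP_abs_le A B
  have hDD : frobIP D D = α ^ 2 * a ^ 2 - 2 * (α * β) * p + β ^ 2 * b ^ 2 := by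
    rw [hD, frobIP_smul_sub_left]
    rw [frobIP_comm A _, frobIP_comm B _, frobIP_smul_sub_left, frobIP_smul_sub_left]
    rw [hAA, hBB, frobIP_comm B A, ← hp]
    ring
  have hABAB : frobIP (A - B) (A - B) = a ^ 2 - 2 * p + b ^ 2 := by
    rw [frobIP_sub_left, frobIP_sub_right, frobIP_sub_right, hAA, hBB,
      frobIP_comm B A, ← hp]
    ring
  have hsq : frobIP D D ≤ M ^ 2 * frobIP (A - B) (A - B) := by
    rw [hDD, hABAB]
    exact key_lip a b p α β M (le_of_abs_le hpb) (neg_le_of_abs_le hpb)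
      (mu_diff_sq μ m M hm hbd a b ha0 hb0)
      (mu_sum_sq μ m M hm hbd a b ha0 hb0)
  have hnD : frobNorm D ≤ M * frobNorm (A - B) := by
    rw [show frobNorm D = Real.sqrt (frobIP D D) from rfl]
    calc Real.sqrt (frobIP D D) ≤ Real.sqrt (M ^ 2 * frobIP (A - B) (A - B)) :=
          Real.sqrt_le_sqrt hsq
      _ = Real.sqrt ((M * frobNorm (A - B)) ^ 2) := by
          rw [← frobNorm_sq (A - B)]; ring_nf
      _ = M * frobNorm (A - B) := Real.sqrt_sq (mul_nonneg hM0 (frobNorm_nonneg _))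
  calc μ (frobNorm A ^ 2) * frobIP A C - μ (frobNorm B ^ 2) * frobIP B C
      = frobIP D C := (frobIP_smul_sub_left α β A B C).symm
    _ ≤ frobNorm D * frobNorm C := frobIP_cs D C
    _ ≤ M * frobNorm (A - B) * frobNorm C :=
        mul_le_mul_of_nonneg_right hnD (frobNorm_nonneg C)
    _ = M * (frobNorm (A - B) * frobNorm C) := by ring

-- pointwise monotonicity estimate
lemma mono_pt {d : ℕ} (μ : ℝ → ℝ) (m M : ℝ) (hm : 0 < m) (hcont : Continuous μ)
    (hbd : ∀ t s : ℝ, 0 ≤ s → s ≤ t →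
      m * (t - s) ≤ μ (t ^ 2) * t - μ (s ^ 2) * s ∧
      μ (t ^ 2) * t - μ (s ^ 2) * s ≤ M * (t - s))
    (A B : Matrix (Fin d) (Fin d) ℝ) :
    m * frobIP (A - B) (A - B) ≤
      μ (frobNorm A ^ 2) * frobIP A (A - B) - μ (frobNorm B ^ 2) * frobIP B (A - B) := by
  set a := frobNorm A with hadef
  set b := frobNorm B with hbdef
  have ha0 : 0 ≤ a := frobNorm_nonneg A
  have hb0 : 0 ≤ b := frobNorm_nonneg B
  set p := frobIP A B with hp
  have hAA : frobIP A A = a ^ 2 := (frobNorm_sq A).symm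
  have hBB : frobIP B B = b ^ 2 := (frobNorm_sq B).symm
  have hpb : |p| ≤ a * b := frobIP_abs_le A B
  have h1 : frobIP A (A - B) = a ^ 2 - p := by
    rw [frobIP_sub_right, hAA, hp]
  have h2 : frobIP B (A - B) = p - b ^ 2 := by
    rw [frobIP_sub_right, hBB, frobIP_comm B A, ← hp]
  have h3 : frobIP (A - B) (A - B) = a ^ 2 - 2 * p + b ^ 2 := by
    rw [frobIP_sub_left, frobIP_sub_right, frobIP_sub_right, hAA, hBB,
      frobIP_comm B A, ← hp]
    ring
  rw [h1, h2, h3]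
  have := key_mono a b p m (μ (a ^ 2)) (μ (b ^ 2)) (le_of_abs_le hpb)
    (mu_ge_m μ m M hm hcont hbd a ha0) (mu_ge_m μ m M hm hcont hbd b hb0)
    (mu_hd μ m M hm hbd a b ha0 hb0)
  linarith

theorem lipschitz_and_strongly_monotone {d : ℕ} {Ω : Type*} [MeasureSpace Ω]
    {V : Type*} [NormedAddCommGroup V] [InnerProductSpace ℝ V]
    (e : V →ₗ[ℝ] (Ω → Matrix (Fin d) (Fin d) ℝ))
    (μ : ℝ → ℝ) (m M : ℝ) (hm : 0 < m) (hmM : m ≤ M)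
    (hC1 : ContDiff ℝ 1 μ)
    (hμ' : ∀ t : ℝ, 0 ≤ t → deriv μ t ≤ 0)
    (hbd : ∀ t s : ℝ, 0 ≤ s → s ≤ t →
      m * (t - s) ≤ μ (t ^ 2) * t - μ (s ^ 2) * s ∧
      μ (t ^ 2) * t - μ (s ^ 2) * s ≤ M * (t - s))
    (hnorm : ∀ v : V, ‖v‖ ^ 2 = ∫ x, frobNorm (e v x) ^ 2)
    (hintN : ∀ v : V, Integrable (fun x => frobNorm (e v x) ^ 2))
    (hintA : ∀ u v w : V,
      Integrable (fun x => μ (frobNorm (e u x) ^ 2) * frobIP (e v x) (e w x)))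
    (u v w : V) :
    (∫ x, μ (frobNorm (e u x) ^ 2) * frobIP (e u x) (e w x)) -
      (∫ x, μ (frobNorm (e v x) ^ 2) * frobIP (e v x) (e w x)) ≤
      Real.sqrt 3 * M * ‖u - v‖ * ‖w‖ ∧
    m * ‖u - v‖ ^ 2 ≤
      (∫ x, μ (frobNorm (e u x) ^ 2) * frobIP (e u x) (e (u - v) x)) -
      (∫ x, μ (frobNorm (e v x) ^ 2) * frobIP (e v x) (e (u - v) x)) := by
  have hM0 : 0 < M := hm.trans_le hmM
  have hE : ∀ x, e (u - v) x = e u x - e v x := by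
    intro x; rw [map_sub]; rfl
  -- measurability of frobNorm compositions
  have hmeas : ∀ z : V, AEStronglyMeasurable (fun x => frobNorm (e z x)) volume := by
    intro z
    have h := (hintN z).aestronglyMeasurable
    have := Real.continuous_sqrt.comp_aestronglyMeasurable h
    refine this.congr (Eventually.of_forall fun x => ?_)
    simp [Real.sqrt_sq (frobNorm_nonneg (e z x))]
  -- product of frobNorms is integrable
  have hprod : ∀ z₁ z₂ : V,
      Integrable (fun x => frobNorm (e z₁ x) * frobNorm (e z₂ x)) := by
    intro z₁ z₂
    refine Integrable.mono' (((hintN z₁).add (hintN z₂)).div_const 2)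
      ((hmeas z₁).mul (hmeas z₂)) (Eventually.of_forall fun x => ?_)
    simp only [Pi.add_apply, Real.norm_eq_abs]
    rw [abs_of_nonneg (mul_nonneg (frobNorm_nonneg _) (frobNorm_nonneg _))]
    nlinarith [sq_nonneg (frobNorm (e z₁ x) - frobNorm (e z₂ x))]
  constructor
  · -- Lipschitz bound
    have hsub := (hintA u u w).sub (hintA v v w)
    have hstep1 : (∫ x, μ (frobNorm (e u x) ^ 2) * frobIP (e u x) (e w x)) -
        (∫ x, μ (frobNorm (e v x) ^ 2) * frobIP (e v x) (e w x)) =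
        ∫ x, (μ (frobNorm (e u x) ^ 2) * frobIP (e u x) (e w x) -
          μ (frobNorm (e v x) ^ 2) * frobIP (e v x) (e w x)) :=
      (integral_sub (hintA u u w) (hintA v v w)).symm
    have hbound : ∀ x, μ (frobNorm (e u x) ^ 2) * frobIP (e u x) (e w x) -
        μ (frobNorm (e v x) ^ 2) * frobIP (e v x) (e w x) ≤
        M * (frobNorm (e (u - v) x) * frobNorm (e w x)) := by
      intro x
      have := lip_pt μ m M hm hbd (e u x) (e v x) (e w x)
      rwa [← hE x] at this
    have hMprod : Integrable
        (fun x => M * (frobNorm (e (u - v) x) * frobNorm (e w x))) :=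
      (hprod (u - v) w).const_mul M
    have hstep2 : ∫ x, (μ (frobNorm (e u x) ^ 2) * frobIP (e u x) (e w x) -
          μ (frobNorm (e v x) ^ 2) * frobIP (e v x) (e w x)) ≤
        ∫ x, M * (frobNorm (e (u - v) x) * frobNorm (e w x)) :=
      integral_mono hsub hMprod hbound
    have hcs : ∫ x, frobNorm (e (u - v) x) * frobNorm (e w x) ≤ ‖u - v‖ * ‖w‖ := by
      have h := integral_cs (fun x => frobNorm (e (u - v) x)) (fun x => frobNorm (e w x))
        (hintN (u - v)) (hintN w) (hprod (u - v) w)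
      rwa [← hnorm (u - v), ← hnorm w, Real.sqrt_sq (norm_nonneg _),
        Real.sqrt_sq (norm_nonneg _)] at h
    have hstep3 : ∫ x, M * (frobNorm (e (u - v) x) * frobNorm (e w x)) ≤
        M * (‖u - v‖ * ‖w‖) := by
      rw [integral_const_mul]
      exact mul_le_mul_of_nonneg_left hcs hM0.le
    have h3 : (1 : ℝ) ≤ Real.sqrt 3 := by
      rw [show (1:ℝ) = Real.sqrt 1 by simp]
      exact Real.sqrt_le_sqrt (by norm_num)
    calc (∫ x, μ (frobNorm (e u x) ^ 2) * frobIP (e u x) (e w x)) -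
          (∫ x, μ (frobNorm (e v x) ^ 2) * frobIP (e v x) (e w x))
        ≤ M * (‖u - v‖ * ‖w‖) := by rw [hstep1]; exact hstep2.trans hstep3
      _ ≤ Real.sqrt 3 * M * ‖u - v‖ * ‖w‖ := by
          nlinarith [mul_nonneg (mul_nonneg hM0.le (norm_nonneg (u - v))) (norm_nonneg w),
            norm_nonneg (u - v), norm_nonneg w]
  · -- strong monotonicity
    have hstep1 : (∫ x, μ (frobNorm (e u x) ^ 2) * frobIP (e u x) (e (u - v) x)) -
        (∫ x, μ (frobNorm (e v x) ^ 2) * frobIP (e v x) (e (u - v) x)) =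
        ∫ x, (μ (frobNorm (e u x) ^ 2) * frobIP (e u x) (e (u - v) x) -
          μ (frobNorm (e v x) ^ 2) * frobIP (e v x) (e (u - v) x)) :=
      (integral_sub (hintA u u (u - v)) (hintA v v (u - v))).symm
    have hbound : ∀ x, m * frobNorm (e (u - v) x) ^ 2 ≤
        μ (frobNorm (e u x) ^ 2) * frobIP (e u x) (e (u - v) x) -
        μ (frobNorm (e v x) ^ 2) * frobIP (e v x) (e (u - v) x) := by
      intro x
      have := mono_pt μ m M hm hC1.continuous hbd (e u x) (e v x)
      rwa [← hE x, ← frobNorm_sq] at this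
    have hstep2 : ∫ x, m * frobNorm (e (u - v) x) ^ 2 ≤
        ∫ x, (μ (frobNorm (e u x) ^ 2) * frobIP (e u x) (e (u - v) x) -
          μ (frobNorm (e v x) ^ 2) * frobIP (e v x) (e (u - v) x)) :=
      integral_mono ((hintN (u - v)).const_mul m)
        ((hintA u u (u - v)).sub (hintA v v (u - v))) hbound
    calc m * ‖u - v‖ ^ 2 = ∫ x, m * frobNorm (e (u - v) x) ^ 2 := by
          rw [hnorm (u - v), integral_const_mul]
      _ ≤ _ := by rw [hstep1]; exact hstep2
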